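/- Let G be a finite simple graph with vertex set V and let S ⊆ V. Then S is a secure dominating set for G if and only if S is a dominating set for G and, for every vertex v ∈ V \ S, there exists a vertex w ∈ S ∩ N(v) such that every neighbour u of w satisfies u ∈ N[v] or |N[u] ∩ S| ≥ 2. -/
import Mathlib


/-- `S` is a dominating set for `G`. -/
def IsDomSet {V : Type*} (G : SimpleGraph V) (S : Finset V) : Prop :=
  ∀ v : V, v ∉ S → ∃ w ∈ S, G.Adj v w

/-- `S` is a secure dominating set for `G`. -/
def IsSecureDomSet {V : Type*} [DecidableEq V] (G : SimpleGraph V) (S : Finset V) : Prop :=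
  IsDomSet G S ∧
    ∀ v : V, v ∉ S → ∃ w ∈ S, G.Adj v w ∧ IsDomSet G (insert v (S.erase w))

/-- The closed neighbourhood `N[u]` of a vertex, as a finset. -/
def closedNbhd {V : Type*} [Fintype V] [DecidableEq V] (G : SimpleGraph V)
    [DecidableRel G.Adj] (u : V) : Finset V :=
  insert u (G.neighborFinset u)

theorem secureDom_iff_defender_condition {V : Type*} [Fintype V] [DecidableEq V]
    (G : SimpleGraph V) [DecidableRel G.Adj] (S : Finset V) :
    IsSecureDomSet G S ↔
      (IsDomSet G S ∧
        ∀ v : V, v ∉ S → ∃ w ∈ S, G.Adj v w ∧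
          ∀ u : V, G.Adj w u → u ∈ closedNbhd G v ∨ 2 ≤ (closedNbhd G u ∩ S).card) := by
  constructor
  · rintro ⟨hdom, hsec⟩
    refine ⟨hdom, fun v hv => ?_⟩
    obtain ⟨w, hwS, hadj, hdom'⟩ := hsec v hv
    refine ⟨w, hwS, hadj, fun u hwu => ?_⟩
    by_cases huv : u ∈ closedNbhd G v
    · exact Or.inl huv
    right
    simp only [closedNbhd, Finset.mem_insert, SimpleGraph.mem_neighborFinset] at huv
    push_neg at huv
    obtain ⟨huv1, huv2⟩ := huv
    by_cases huS : u ∈ S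
    · have h1 : u ∈ closedNbhd G u ∩ S := by simp [closedNbhd, huS]
      have h2 : w ∈ closedNbhd G u ∩ S := by simp [closedNbhd, hwS, hwu.symm]
      have hne : u ≠ w := fun h => G.irrefl (h ▸ hwu)
      exact Finset.one_lt_card.mpr ⟨u, h1, w, h2, hne⟩
    · have hu' : u ∉ insert v (S.erase w) := by simp [huv1, huS]
      obtain ⟨s, hs, hus⟩ := hdom' u hu'
      rcases Finset.mem_insert.mp hs with h | h
      · exact absurd (h ▸ hus).symm huv2
      · have hsS := Finset.mem_of_mem_erase h
        have hsw : s ≠ w := Finset.ne_of_mem_erase h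
        have h1 : s ∈ closedNbhd G u ∩ S := by simp [closedNbhd, hsS, hus]
        have h2 : w ∈ closedNbhd G u ∩ S := by simp [closedNbhd, hwS, hwu.symm]
        exact Finset.one_lt_card.mpr ⟨s, h1, w, h2, hsw⟩
  · rintro ⟨hdom, hcond⟩
    refine ⟨hdom, fun v hv => ?_⟩
    obtain ⟨w, hwS, hadj, hw⟩ := hcond v hv
    refine ⟨w, hwS, hadj, fun x hx => ?_⟩
    by_cases hxw : x = w
    · exact ⟨v, Finset.mem_insert_self _ _, hxw ▸ hadj.symm⟩
    have hxS : x ∉ S := fun h =>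
      hx (Finset.mem_insert.mpr (Or.inr (Finset.mem_erase.mpr ⟨hxw, h⟩)))
    have hxv : x ≠ v := fun h => hx (h ▸ Finset.mem_insert_self _ _)
    obtain ⟨s, hsS, hxs⟩ := hdom x hxS
    by_cases hsw : s = w
    · have hwx : G.Adj w x := (hsw ▸ hxs).symm
      rcases hw x hwx with h | h
      · simp only [closedNbhd, Finset.mem_insert, SimpleGraph.mem_neighborFinset] at h
        rcases h with h | h
        · exact absurd h hxv
        · exact ⟨v, Finset.mem_insert_self _ _, h.symm⟩
      · obtain ⟨t, ht, htw⟩ := Finset.exists_mem_ne h w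
        simp only [closedNbhd, Finset.mem_inter, Finset.mem_insert,
          SimpleGraph.mem_neighborFinset] at ht
        obtain ⟨h1, h2⟩ := ht
        rcases h1 with h1 | h1
        · exact absurd (h1 ▸ h2) hxS
        · exact ⟨t, Finset.mem_insert.mpr (Or.inr (Finset.mem_erase.mpr ⟨htw, h2⟩)), h1⟩
    · exact ⟨s, Finset.mem_insert.mpr (Or.inr (Finset.mem_erase.mpr ⟨hsw, hsS⟩)), hxs⟩
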